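/- Let M, S be symmetric positive definite and Φ an n×r matrix of POD coefficient vectors with ΦᵀMΦ = I_r (M-orthonormal ROM basis). Define the FE-version filter F_FE = (M + δ²S)⁻¹M acting on ℝⁿ and the ROM-version filter F_ROM = (M_r + δ²S_r)⁻¹M_r on ℝʳ with M_r = ΦᵀMΦ, S_r = ΦᵀSΦ. If the range of Φ is invariant under M⁻¹S, then for every a ∈ ℝʳ, F_FE(Φ a) = Φ F_ROM(a). -/

import Mathlib

/-!
If `M⁻¹ S` maps the range of `Φ` into itself and `Φᵀ M Φ = 1`, then `S Φ = M Φ S_r` with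
`S_r = Φᵀ S Φ`, so the Helmholtz operator intertwines the two bases:
`(M + δ² S) Φ = M Φ (1 + δ² S_r)`. Inverting both Helmholtz matrices gives
`(M + δ² S)⁻¹ M Φ = Φ (1 + δ² S_r)⁻¹`, which is the claim since `M_r = 1`.
-/

namespace Matrix

section Intertwining

variable {ι κ K : Type*} [Fintype ι] [Fintype κ] [CommRing K]
  {M S : Matrix ι ι K} {Φ : Matrix ι κ K}

theorem mul_eq_mul_mul_transpose_mul_mul_of_invariant [DecidableEq ι] [DecidableEq κ]
    (hM : IsUnit M) (hΦ : Φᵀ * M * Φ = 1)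
    (hinv : ∀ a, ∃ b, (M⁻¹ * S) *ᵥ (Φ *ᵥ a) = Φ *ᵥ b) :
    S * Φ = M * Φ * (Φᵀ * S * Φ) := by
  have hMdet : IsUnit M.det := (isUnit_iff_isUnit_det M).mp hM
  refine ext_iff_mulVec.mpr fun a => ?_
  obtain ⟨b, hb⟩ := hinv a
  have hSΦa : S *ᵥ (Φ *ᵥ a) = M *ᵥ (Φ *ᵥ b) := by
    rw [← hb]
    simp only [mulVec_mulVec, ← Matrix.mul_assoc, mul_nonsing_inv M hMdet, Matrix.one_mul]
  have hb_eq : b = (Φᵀ * S * Φ) *ᵥ a := by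
    calc b = (Φᵀ * M * Φ) *ᵥ b := by rw [hΦ, one_mulVec]
      _ = Φᵀ *ᵥ (M *ᵥ (Φ *ᵥ b)) := by simp only [mulVec_mulVec, Matrix.mul_assoc]
      _ = (Φᵀ * S * Φ) *ᵥ a := by rw [← hSΦa]; simp only [mulVec_mulVec, Matrix.mul_assoc]
  rw [← mulVec_mulVec, hSΦa, ← mulVec_mulVec, ← mulVec_mulVec, ← hb_eq]

theorem add_smul_mul_eq_mul_mul_one_add_smul [DecidableEq κ] {Sr : Matrix κ κ K}
    (hS : S * Φ = M * Φ * Sr) (c : K) : (M + c • S) * Φ = M * Φ * (1 + c • Sr) := by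
  rw [Matrix.add_mul, Matrix.smul_mul, hS, Matrix.mul_add, Matrix.mul_one, Matrix.mul_smul]

theorem inv_mul_mul_eq_mul_inv [DecidableEq ι] [DecidableEq κ]
    {A : Matrix ι ι K} {B : Matrix κ κ K} (hA : IsUnit A) (hB : IsUnit B)
    (h : A * Φ = M * Φ * B) :
    A⁻¹ * M * Φ = Φ * B⁻¹ := by
  have hAdet : IsUnit A.det := (isUnit_iff_isUnit_det A).mp hA
  have hBdet : IsUnit B.det := (isUnit_iff_isUnit_det B).mp hB
  calc A⁻¹ * M * Φ = A⁻¹ * (M * Φ * B) * B⁻¹ := by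
        rw [Matrix.mul_assoc A⁻¹ (M * Φ * B), mul_nonsing_inv_cancel_right _ _ hBdet,
          Matrix.mul_assoc]
    _ = Φ * B⁻¹ := by rw [← h, nonsing_inv_mul_cancel_left A Φ hAdet]

end Intertwining

end Matrix

open Matrix in
theorem stmt_18_general {n r : ℕ} (M S : Matrix (Fin n) (Fin n) ℝ)
    (hM : M.PosDef) (hS : S.PosDef) (δ : ℝ)
    (Φ : Matrix (Fin n) (Fin r) ℝ) (hΦ : Φᵀ * M * Φ = 1)
    (hinv : ∀ a : Fin r → ℝ, ∃ b : Fin r → ℝ,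
      (M⁻¹ * S).mulVec (Φ.mulVec a) = Φ.mulVec b) :
    ∀ a : Fin r → ℝ,
      ((M + δ ^ 2 • S)⁻¹ * M).mulVec (Φ.mulVec a) =
        Φ.mulVec ((((Φᵀ * M * Φ) + δ ^ 2 • (Φᵀ * S * Φ))⁻¹ * (Φᵀ * M * Φ)).mulVec a) := by
  intro a
  have hSr : (Φᵀ * S * Φ).PosSemidef := by
    simpa using hS.posSemidef.conjTranspose_mul_mul_same Φ
  have hA : (M + δ ^ 2 • S).PosDef := hM.add_posSemidef (hS.posSemidef.smul (sq_nonneg δ))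
  have hB : (1 + δ ^ 2 • (Φᵀ * S * Φ)).PosDef :=
    PosDef.one.add_posSemidef (hSr.smul (sq_nonneg δ))
  have hFilter : (M + δ ^ 2 • S)⁻¹ * M * Φ = Φ * (1 + δ ^ 2 • (Φᵀ * S * Φ))⁻¹ :=
    inv_mul_mul_eq_mul_inv hA.isUnit hB.isUnit <| add_smul_mul_eq_mul_mul_one_add_smul
      (mul_eq_mul_mul_transpose_mul_mul_of_invariant hM.isUnit hΦ hinv) _
  rw [hΦ, Matrix.mul_one, mulVec_mulVec, hFilter, ← mulVec_mulVec]

open Matrix in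
theorem stmt_18 {n r : ℕ} (M S : Matrix (Fin n) (Fin n) ℝ)
    (hM : M.PosDef) (hS : S.PosDef) (δ : ℝ) (hδ : 0 < δ)
    (Φ : Matrix (Fin n) (Fin r) ℝ) (hΦ : Φᵀ * M * Φ = 1)
    (hinv : ∀ a : Fin r → ℝ, ∃ b : Fin r → ℝ,
      (M⁻¹ * S).mulVec (Φ.mulVec a) = Φ.mulVec b) :
    ∀ a : Fin r → ℝ,
      ((M + δ ^ 2 • S)⁻¹ * M).mulVec (Φ.mulVec a) =
        Φ.mulVec ((((Φᵀ * M * Φ) + δ ^ 2 • (Φᵀ * S * Φ))⁻¹ * (Φᵀ * M * Φ)).mulVec a) :=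
  stmt_18_general M S hM hS δ Φ hΦ hinv
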